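/- Let k be a field, R = (k[X,Y]/(X*Y, Y^2)) localized at (X,Y), with x, y the images of X, Y and m = (x, y). Then m^2 = x*m and y ∉ (x), i.e., (x) is a reduction of m with reduction number exactly 1. -/

import Mathlib

open MvPolynomial

set_option synthInstance.maxHeartbeats 1000000
set_option maxHeartbeats 1000000

/-- `A = k[X,Y]/(XY, Y²)`. -/
abbrev Stmt11Base (k : Type*) [Field k] : Type _ :=
  MvPolynomial (Fin 2) k ⧸
    Ideal.span {X 0 * X 1, (X 1 : MvPolynomial (Fin 2) k) ^ 2}

/-- The image of `X` in `A`. -/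
noncomputable abbrev stmt11x (k : Type*) [Field k] : Stmt11Base k :=
  Ideal.Quotient.mk _ (X 0)

/-- The image of `Y` in `A`. -/
noncomputable abbrev stmt11y (k : Type*) [Field k] : Stmt11Base k :=
  Ideal.Quotient.mk _ (X 1)

/-- The ideal `(x, y)` of `A`. -/
noncomputable abbrev stmt11P (k : Type*) [Field k] : Ideal (Stmt11Base k) :=
  Ideal.span {stmt11x k, stmt11y k}

/-! Since `x * y = y ^ 2 = 0`, already in `A` one has `(x, y) ^ 2 = (x ^ 2) = (x) * (x, y)`.
For `y ∉ (x)` in `A_P`, use `A → k[ε]`, `x ↦ 0`, `y ↦ ε`: it sends every element outside `P`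
(nonzero constant term) to a unit, hence factors through `A_P`, where it kills `(x)` but not `y`. -/

theorem Ideal.span_pair_sq_eq_span_singleton_mul {R : Type*} [CommRing R] {a b : R}
    (hab : a * b = 0) (hbb : b * b = 0) :
    Ideal.span {a, b} ^ 2 = Ideal.span {a} * Ideal.span {a, b} := by
  simp only [sq, Ideal.span_insert (x := a), mul_sup, sup_mul,
    Ideal.span_singleton_mul_span_singleton, mul_comm b a, hab, hbb, Ideal.span_singleton_zero,
    sup_bot_eq]

theorem RingHom.notMem_span_singleton_of_apply_eq_zero {R S : Type*} [CommSemiring R] [Semiring S]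
    (f : R →+* S) {x y : R} (hx : f x = 0) (hy : f y ≠ 0) : y ∉ Ideal.span {x} :=
  fun h => hy ((Ideal.span_singleton_le_iff_mem (RingHom.ker f)).2 hx h)

theorem DualNumber.eps_ne_zero {R : Type*} [Zero R] [One R] [NeZero (1 : R)] :
    (DualNumber.eps : DualNumber R) ≠ 0 :=
  fun h => one_ne_zero congr(TrivSqZeroExt.snd $h)

theorem MvPolynomial.mem_idealOfVars_iff {σ R : Type*} [CommSemiring R] {p : MvPolynomial σ R} :
    p ∈ idealOfVars σ R ↔ constantCoeff p = 0 := by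
  rw [← pow_one (idealOfVars σ R), mem_pow_idealOfVars_iff']
  simp [Finsupp.degree_eq_zero_iff, constantCoeff_eq]

theorem stmt11x_mul_stmt11y (k : Type*) [Field k] : stmt11x k * stmt11y k = 0 := by
  rw [← map_mul, Ideal.Quotient.eq_zero_iff_mem]
  exact Ideal.subset_span (by simp)

theorem stmt11y_mul_self (k : Type*) [Field k] : stmt11y k * stmt11y k = 0 := by
  rw [← map_mul, Ideal.Quotient.eq_zero_iff_mem]
  exact Ideal.subset_span (by simp [sq])

namespace Stmt11Base

variable (k : Type*) [Field k]

variable {k} in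
theorem mk_mem_stmt11P_of_constantCoeff_eq_zero {p : MvPolynomial (Fin 2) k}
    (hp : constantCoeff p = 0) : Ideal.Quotient.mk _ p ∈ stmt11P k := by
  have : idealOfVars (Fin 2) k ≤ (stmt11P k).comap (Ideal.Quotient.mk _) := by
    refine Ideal.span_le.2 (Set.range_subset_iff.2 fun i => ?_)
    fin_cases i <;> exact Ideal.subset_span (by simp)
  exact this (mem_idealOfVars_iff.2 hp)

noncomputable def toDualNumber : Stmt11Base k →ₐ[k] DualNumber k :=
  Ideal.Quotient.liftₐ _ (aeval ![0, DualNumber.eps]) fun _ hp => by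
    refine Ideal.span_le
      (I := RingHom.ker (aeval (R := k) ![0, (DualNumber.eps : DualNumber k)])).2 ?_ hp
    rintro q (rfl | rfl) <;> simp [sq]

theorem toDualNumber_mk (p : MvPolynomial (Fin 2) k) :
    toDualNumber k (Ideal.Quotient.mk _ p) = aeval ![0, DualNumber.eps] p :=
  rfl

theorem toDualNumber_x : toDualNumber k (stmt11x k) = 0 := by
  simp [toDualNumber_mk]

theorem toDualNumber_y : toDualNumber k (stmt11y k) = DualNumber.eps := by
  simp [toDualNumber_mk]

theorem fst_toDualNumber_mk (p : MvPolynomial (Fin 2) k) :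
    (toDualNumber k (Ideal.Quotient.mk _ p)).fst = constantCoeff p := by
  have := MvPolynomial.ringHom_ext
    (f := (TrivSqZeroExt.fstHom k k k).toRingHom.comp
      (aeval (R := k) ![0, (DualNumber.eps : DualNumber k)]).toRingHom)
    (g := constantCoeff) (by simp) (by intro i; fin_cases i <;> simp)
  exact congr($this p)

variable {k} in
theorem isUnit_toDualNumber {u : Stmt11Base k} (hu : u ∉ stmt11P k) :
    IsUnit (toDualNumber k u) := by
  obtain ⟨p, rfl⟩ := Ideal.Quotient.mk_surjective u
  rw [TrivSqZeroExt.isUnit_iff_isUnit_fst, isUnit_iff_ne_zero, fst_toDualNumber_mk]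
  exact fun hp => hu (mk_mem_stmt11P_of_constantCoeff_eq_zero hp)

end Stmt11Base

/-- In `R = (k[X,Y]/(XY,Y²))` localized at `(x,y)`, with `m = (x,y)`,
one has `m² = (x)·m` and `y ∉ (x)`: `(x)` is a reduction of `m` with reduction
number exactly 1. -/
theorem stmt_11 {k : Type*} [Field k] (hP : (stmt11P k).IsPrime) :
    haveI := hP
    Ideal.span {algebraMap (Stmt11Base k) (Localization.AtPrime (stmt11P k)) (stmt11x k),
        algebraMap (Stmt11Base k) (Localization.AtPrime (stmt11P k)) (stmt11y k)} ^ 2 =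
      Ideal.span {algebraMap (Stmt11Base k) (Localization.AtPrime (stmt11P k)) (stmt11x k)} *
        Ideal.span {algebraMap (Stmt11Base k) (Localization.AtPrime (stmt11P k)) (stmt11x k),
          algebraMap (Stmt11Base k) (Localization.AtPrime (stmt11P k)) (stmt11y k)} ∧
      algebraMap (Stmt11Base k) (Localization.AtPrime (stmt11P k)) (stmt11y k) ∉
        Ideal.span {algebraMap (Stmt11Base k) (Localization.AtPrime (stmt11P k)) (stmt11x k)} := by
  have := hP
  let f := algebraMap (Stmt11Base k) (Localization.AtPrime (stmt11P k))
  refine ⟨Ideal.span_pair_sq_eq_span_singleton_mul (a := f (stmt11x k)) (b := f (stmt11y k))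
    (by rw [← map_mul, stmt11x_mul_stmt11y, map_zero])
    (by rw [← map_mul, stmt11y_mul_self, map_zero]), ?_⟩
  let g := IsLocalization.lift (M := (stmt11P k).primeCompl)
    (S := Localization.AtPrime (stmt11P k)) fun s => Stmt11Base.isUnit_toDualNumber s.2
  refine g.notMem_span_singleton_of_apply_eq_zero ?_ ?_
  · exact (IsLocalization.lift_eq _ _).trans (Stmt11Base.toDualNumber_x k)
  · rw [IsLocalization.lift_eq]
    exact Stmt11Base.toDualNumber_y k ▸ DualNumber.eps_ne_zero
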